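/- arXiv:1702.02255 — 2 statements merged into one kernel-verified Lean document; each statement's English description precedes it below -/
import Mathlib

section
/- Let K be a field of characteristic not 2, E: y² = (x−α₁)(x−α₂)(x−α₃) with distinct αᵢ ∈ K. Let P = (x₀,y₀) ∈ E(K) and let Q be a half of P corresponding to square roots (r₁, r₂, r₃) with r₁r₂r₃ = −y₀. For a fixed index i, let 𝒬ᵢ be the half of P corresponding to the choice where rᵢ keeps its sign and the other two roots change sign. Then 𝒬ᵢ − Q = Wᵢ, where Wᵢ = (αᵢ, 0) is the 2-torsion point. -/
/-- The elliptic curve `y² = (x − α 0)(x − α 1)(x − α 2)` as an affine Weierstrass curve. -/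
def cubicCurve {K : Type*} [Field K] (α : Fin 3 → K) : WeierstrassCurve.Affine K :=
  { a₁ := 0, a₂ := -(α 0 + α 1 + α 2), a₃ := 0,
    a₄ := α 0 * α 1 + α 1 * α 2 + α 2 * α 0, a₆ := -(α 0 * α 1 * α 2) }

/-- The square roots with the sign of all but the `i`-th one flipped. -/
def flipExcept {K : Type*} [Field K] (r : Fin 3 → K) (i : Fin 3) : Fin 3 → K :=
  fun l => if l = i then r l else -(r l)

/-!
Write `a, b, c` for the roots `rᵢ, rⱼ, rₖ`, so that `αᵢ = x₀ - a²` etc. Then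
`x(Q) - αᵢ = (a + b)(a + c)` and `y(Q) = -(a + b)(b + c)(c + a)`, so the chord through `Wᵢ`
and `Q` has slope `-(b + c)`, and the chord–tangent formulas turn `Wᵢ + Q` into the point
`(x₀ + bc - ab - ca, (a - b)(b + c)(a - c))`, which is `𝒬ᵢ`. Since the curve only depends on the
roots up to order, it suffices to do this computation with `αᵢ` listed first.
-/

section

open WeierstrassCurve.Affine

variable {K : Type*} [Field K]

lemma cubicCurve_eq_of_ne (α : Fin 3 → K) {i j k : Fin 3} (hij : i ≠ j) (hik : i ≠ k)
    (hjk : j ≠ k) : cubicCurve α = cubicCurve ![α i, α j, α k] := by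
  fin_cases i <;> fin_cases j <;> fin_cases k <;>
    simp only [ne_eq, not_true_eq_false] at hij hik hjk <;> ext <;>
    simp only [cubicCurve, Fin.zero_eta, Fin.mk_one, Fin.reduceFinMk, Matrix.cons_val_zero,
      Matrix.cons_val_one, Matrix.cons_val_two, Matrix.tail_cons, Matrix.head_cons] <;>
    ring

lemma cubicCurve_nonsingular_root {e₁ e₂ e₃ : K} (h₁₂ : e₁ ≠ e₂) (h₁₃ : e₁ ≠ e₃) :
    (cubicCurve ![e₁, e₂, e₃]).Nonsingular e₁ 0 := by
  refine (nonsingular_iff _ _).2 ⟨(equation_iff _ _).2 ?_, Or.inl ?_⟩ <;>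
    simp only [cubicCurve, Matrix.cons_val_zero, Matrix.cons_val_one, Matrix.cons_val_two,
      Matrix.tail_cons, Matrix.head_cons]
  · ring
  · -- the `x`-derivative of the cubic at the root `e₁` is `(e₁ - e₂)(e₁ - e₃)`
    intro h
    exact mul_ne_zero (sub_ne_zero.2 h₁₂) (sub_ne_zero.2 h₁₃) (by linear_combination -h)

/- The curve `W` and the coordinates are variables constrained by equations, so that the lemma
applies to points whose types only agree propositionally with the ones displayed here. -/
theorem exists_some_sub_some_eq_root [DecidableEq K] {W : WeierstrassCurve.Affine K}
    {e₁ e₂ e₃ x₀ a b c x y x' y' : K}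
    (hW : W = cubicCurve ![e₁, e₂, e₃]) (h₁₂ : e₁ ≠ e₂) (h₁₃ : e₁ ≠ e₃)
    (ha : a ^ 2 = x₀ - e₁) (hb : b ^ 2 = x₀ - e₂) (hc : c ^ 2 = x₀ - e₃)
    (hx : x = x₀ + (a * b + b * c + c * a)) (hy : y = -((a + b) * (b + c) * (c + a)))
    (hx' : x' = x₀ + (b * c - a * b - c * a)) (hy' : y' = (a - b) * (b + c) * (a - c))
    (hQ : W.Nonsingular x y) (hQ' : W.Nonsingular x' y') :
    ∃ hT : W.Nonsingular e₁ 0, Point.some _ _ hQ' - Point.some _ _ hQ = Point.some _ _ hT := by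
  subst hW hx hy hx' hy'
  have hab : a + b ≠ 0 := fun h => h₁₂ (by linear_combination ha - hb - (a - b) * h)
  have hac : a + c ≠ 0 := fun h => h₁₃ (by linear_combination ha - hc - (a - c) * h)
  have hdx : e₁ - (x₀ + (a * b + b * c + c * a)) = -((a + b) * (a + c)) := by
    linear_combination ha
  have hne : e₁ ≠ x₀ + (a * b + b * c + c * a) := by
    rw [← sub_ne_zero, hdx, neg_ne_zero]
    exact mul_ne_zero hab hac
  have hslope : (cubicCurve ![e₁, e₂, e₃]).slope e₁ (x₀ + (a * b + b * c + c * a)) 0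
      (-((a + b) * (b + c) * (c + a))) = -(b + c) := by
    rw [slope_of_X_ne hne, hdx, div_eq_iff (neg_ne_zero.2 (mul_ne_zero hab hac))]
    ring
  refine ⟨cubicCurve_nonsingular_root h₁₂ h₁₃, ?_⟩
  rw [sub_eq_iff_eq_add, Point.add_of_X_ne hne, Point.some.injEq, hslope]
  simp only [addX, addY, negY, negAddY, cubicCurve, Matrix.cons_val_zero, Matrix.cons_val_one,
    Matrix.cons_val_two, Matrix.tail_cons, Matrix.head_cons]
  constructor
  · linear_combination -hb - hc
  · linear_combination (b + c) * (ha - hb - hc)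

end

open Classical in
theorem half_point_sign_change_diff_general {K : Type*} [Field K]
    (α r : Fin 3 → K) (hα : Function.Injective α) (x₀ : K)
    (hr : ∀ l, r l ^ 2 = x₀ - α l) (i : Fin 3)
    (hQ : (cubicCurve α).Nonsingular
      (x₀ + (r 0 * r 1 + r 1 * r 2 + r 2 * r 0))
      (-((r 0 + r 1) * (r 1 + r 2) * (r 2 + r 0))))
    (hQi : (cubicCurve α).Nonsingular
      (x₀ + (flipExcept r i 0 * flipExcept r i 1 + flipExcept r i 1 * flipExcept r i 2 +
        flipExcept r i 2 * flipExcept r i 0))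
      (-((flipExcept r i 0 + flipExcept r i 1) * (flipExcept r i 1 + flipExcept r i 2) *
        (flipExcept r i 2 + flipExcept r i 0)))) :
    ∃ hWi : (cubicCurve α).Nonsingular (α i) 0,
      WeierstrassCurve.Affine.Point.some _ _ hQi - WeierstrassCurve.Affine.Point.some _ _ hQ =
        WeierstrassCurve.Affine.Point.some _ _ hWi := by
  fin_cases i <;> [
    refine exists_some_sub_some_eq_root
      (cubicCurve_eq_of_ne α (by decide) (by decide) (by decide)) (hα.ne (by decide))
      (hα.ne (by decide)) (hr 0) (hr 1) (hr 2) (by ring) (by ring) ?_ ?_ hQ hQi;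
    refine exists_some_sub_some_eq_root
      (cubicCurve_eq_of_ne α (by decide) (by decide) (by decide)) (hα.ne (by decide))
      (hα.ne (by decide)) (hr 1) (hr 0) (hr 2) (by ring) (by ring) ?_ ?_ hQ hQi;
    refine exists_some_sub_some_eq_root
      (cubicCurve_eq_of_ne α (by decide) (by decide) (by decide)) (hα.ne (by decide))
      (hα.ne (by decide)) (hr 2) (hr 0) (hr 1) (by ring) (by ring) ?_ ?_ hQ hQi] <;>
  simp only [flipExcept, Fin.zero_eta, Fin.mk_one, Fin.reduceFinMk, Fin.reduceEq, Fin.isValue,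
    ↓reduceIte] <;> ring

open Classical in
theorem half_point_sign_change_diff {K : Type*} [Field K] (h2 : (2 : K) ≠ 0)
    (α r : Fin 3 → K) (hα : Function.Injective α) (x₀ y₀ : K)
    (hP : (cubicCurve α).Nonsingular x₀ y₀)
    (hr : ∀ l, r l ^ 2 = x₀ - α l) (hprod : r 0 * r 1 * r 2 = -y₀) (i : Fin 3)
    (hQ : (cubicCurve α).Nonsingular
      (x₀ + (r 0 * r 1 + r 1 * r 2 + r 2 * r 0))
      (-((r 0 + r 1) * (r 1 + r 2) * (r 2 + r 0))))
    (hQi : (cubicCurve α).Nonsingular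
      (x₀ + (flipExcept r i 0 * flipExcept r i 1 + flipExcept r i 1 * flipExcept r i 2 +
        flipExcept r i 2 * flipExcept r i 0))
      (-((flipExcept r i 0 + flipExcept r i 1) * (flipExcept r i 1 + flipExcept r i 2) *
        (flipExcept r i 2 + flipExcept r i 0)))) :
    ∃ hWi : (cubicCurve α).Nonsingular (α i) 0,
      WeierstrassCurve.Affine.Point.some _ _ hQi - WeierstrassCurve.Affine.Point.some _ _ hQ =
        WeierstrassCurve.Affine.Point.some _ _ hWi :=
  half_point_sign_change_diff_general α r hα x₀ hr i hQ hQi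
end

section
/- Let K be a field of characteristic not 2, E: y² = (x−α₁)(x−α₂)(x−α₃) with distinct αᵢ ∈ K, and P ≠ Wᵢ a point of E(K) that is twice a point Q ∈ E(K) as in the explicit half-point formula with roots r₁,r₂,r₃. Then the three points 𝒬ᵢ, −Q, Wᵢ are collinear, lying on the line y = (rⱼ+rₖ)(x − αᵢ). -/
private theorem fin_mk_two (h : 2 < 3) : (⟨2, h⟩ : Fin 3) = 2 := rfl
private theorem fin_mk_one (h : 1 < 3) : (⟨1, h⟩ : Fin 3) = 1 := rfl
private theorem fin_mk_zero (h : 0 < 3) : (⟨0, h⟩ : Fin 3) = 0 := rfl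

theorem half_points_collinear {K : Type*} [Field K] (h2 : (2 : K) ≠ 0)
    (α r : Fin 3 → K) (hα : Function.Injective α) (x₀ y₀ : K)
    (hP : y₀ ^ 2 = (x₀ - α 0) * (x₀ - α 1) * (x₀ - α 2))
    (hr : ∀ l, r l ^ 2 = x₀ - α l) (hprod : r 0 * r 1 * r 2 = -y₀)
    (i j k : Fin 3) (hij : i ≠ j) (hik : i ≠ k) (hjk : j ≠ k)
    (hPW : ¬(x₀ = α i ∧ y₀ = 0)) :
    -- 𝒬ᵢ lies on the line y = (rⱼ + rₖ)(x − αᵢ)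
    (-((flipExcept r i 0 + flipExcept r i 1) * (flipExcept r i 1 + flipExcept r i 2) *
        (flipExcept r i 2 + flipExcept r i 0))) =
      (r j + r k) * ((x₀ + (flipExcept r i 0 * flipExcept r i 1 +
        flipExcept r i 1 * flipExcept r i 2 + flipExcept r i 2 * flipExcept r i 0)) - α i) ∧
    -- −Q lies on the line y = (rⱼ + rₖ)(x − αᵢ)
    (-(-((r 0 + r 1) * (r 1 + r 2) * (r 2 + r 0)))) =
      (r j + r k) * ((x₀ + (r 0 * r 1 + r 1 * r 2 + r 2 * r 0)) - α i) ∧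
    -- Wᵢ lies on the line y = (rⱼ + rₖ)(x − αᵢ)
    (0 : K) = (r j + r k) * (α i - α i) := by
  refine ⟨?_, ?_, by ring⟩ <;>
    fin_cases i <;> fin_cases j <;> fin_cases k <;>
      simp_all only [flipExcept, Fin.isValue, ne_eq, not_true_eq_false, not_false_eq_true,
        Fin.reduceEq, if_true, if_false, ite_true, ite_false, Fin.zero_eta, Fin.mk_one, fin_mk_two, fin_mk_one, fin_mk_zero] <;>
    first
      | exact absurd rfl (by assumption)
      | linear_combination (r 1 + r 2) * hr 0
      | linear_combination (r 0 + r 2) * hr 1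
      | linear_combination (r 0 + r 1) * hr 2
end
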